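/- Let G be a probability measure on ℝ and define S_G(t) = ∫ P{|N(u,1)| > t} G(du), the probability of exceeding threshold t under a Gaussian location mixture. Then for every t ≥ 0, S_G(t) ≤ 2Φ(-t) + ρ_G(1), where ρ_G(1) = ∫ min(u²,1) G(du). -/

import Mathlib

/-!
Write `Φ = stdCDF`, `φ = stdPDF`. By symmetry the integrand of `S_G(t)` is `Φ(-t + u) + Φ(-t - u)`,
and its second difference `Φ(a + u) + Φ(a - u) - 2Φ(a) = ∫_a^{a+u} (φ x - φ (x - u)) dx` is at most
`u² / 2` because `φ` is `1/2`-Lipschitz (`|φ'(z)| = |z| φ(z) ≤ 1/√(2π)`). Since the integrand is also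
a probability, it is at most `2Φ(-t) + min(u², 1)`; integrate against `G`.
-/

open MeasureTheory Set

noncomputable def stdPDF (x : ℝ) : ℝ := Real.exp (-x^2/2) / Real.sqrt (2*Real.pi)

noncomputable def stdCDF (t : ℝ) : ℝ := ∫ x in Set.Iic t, stdPDF x

/-- S_G(t) = ∫ P{|N(u,1)| > t} G(du) = ∫ [1 - Φ(t-u) + Φ(-t-u)] G(du). -/
noncomputable def SG (G : Measure ℝ) (t : ℝ) : ℝ :=
  ∫ u, (1 - stdCDF (t - u) + stdCDF (-t - u)) ∂G

noncomputable def rho (G : Measure ℝ) (t : ℝ) : ℝ := ∫ u, min (u^2) (t^2) ∂G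

lemma stdPDF_nonneg (x : ℝ) : 0 ≤ stdPDF x := by
  unfold stdPDF
  positivity

lemma stdPDF_neg (x : ℝ) : stdPDF (-x) = stdPDF x := by
  simp only [stdPDF, neg_sq]

lemma continuous_stdPDF : Continuous stdPDF := by
  unfold stdPDF
  fun_prop

lemma stdPDF_eq_exp_neg_mul_sq (x : ℝ) :
    stdPDF x = Real.exp (-(1 / 2) * x ^ 2) / Real.sqrt (2 * Real.pi) := by
  rw [stdPDF, neg_div, neg_mul, one_div_mul_eq_div]

lemma integrable_stdPDF : Integrable stdPDF := by
  rw [funext stdPDF_eq_exp_neg_mul_sq]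
  exact (integrable_exp_neg_mul_sq (by norm_num)).div_const _

lemma integral_stdPDF : ∫ x, stdPDF x = 1 := by
  simp only [stdPDF_eq_exp_neg_mul_sq]
  rw [integral_div, integral_gaussian, show Real.pi / (1 / 2) = 2 * Real.pi by ring]
  exact div_self (Real.sqrt_pos.2 (by positivity)).ne'

lemma hasDerivAt_stdPDF (x : ℝ) : HasDerivAt stdPDF (-x * stdPDF x) x := by
  have hquad : HasDerivAt (fun x : ℝ => -x ^ 2 / 2) (-x) x :=
    ((hasDerivAt_pow 2 x).neg.div_const 2).congr_deriv (by push_cast; ring)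
  exact (((Real.hasDerivAt_exp _).comp x hquad).div_const _).congr_deriv (by unfold stdPDF; ring)

lemma abs_mul_exp_neg_sq_div_two_le_one (z : ℝ) : |z| * Real.exp (-z ^ 2 / 2) ≤ 1 := by
  have hz : |z| ≤ Real.exp (z ^ 2 / 2) := by
    nlinarith [sq_abs z, sq_nonneg (|z| - 1), Real.add_one_le_exp (z ^ 2 / 2)]
  calc |z| * Real.exp (-z ^ 2 / 2) ≤ Real.exp (z ^ 2 / 2) * Real.exp (-z ^ 2 / 2) := by gcongr
    _ = 1 := by rw [← Real.exp_add, neg_div, add_neg_cancel, Real.exp_zero]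

lemma two_le_sqrt_two_pi : (2 : ℝ) ≤ Real.sqrt (2 * Real.pi) :=
  (Real.le_sqrt (by norm_num) (by positivity)).2 (by nlinarith [Real.pi_gt_three])

lemma lipschitzWith_stdPDF : LipschitzWith (1 / 2) stdPDF := by
  refine lipschitzWith_of_nnnorm_deriv_le (fun z => (hasDerivAt_stdPDF z).differentiableAt)
    fun z => ?_
  rw [← NNReal.coe_le_coe, coe_nnnorm, (hasDerivAt_stdPDF z).deriv, Real.norm_eq_abs, abs_mul,
    abs_neg, abs_of_nonneg (stdPDF_nonneg z), stdPDF, ← mul_div_assoc, div_le_iff₀ (by positivity)]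
  have := abs_mul_exp_neg_sq_div_two_le_one z
  have := two_le_sqrt_two_pi
  push_cast
  linarith

lemma stdCDF_sub_stdCDF (a b : ℝ) : stdCDF b - stdCDF a = ∫ x in a..b, stdPDF x :=
  intervalIntegral.integral_Iic_sub_Iic integrable_stdPDF.integrableOn
    integrable_stdPDF.integrableOn

lemma stdCDF_nonneg (s : ℝ) : 0 ≤ stdCDF s :=
  setIntegral_nonneg measurableSet_Iic fun x _ => stdPDF_nonneg x

lemma stdCDF_neg (s : ℝ) : stdCDF (-s) = 1 - stdCDF s := by
  have hreflect : stdCDF (-s) = ∫ x in Ioi s, stdPDF x := by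
    rw [stdCDF]
    simpa only [stdPDF_neg, neg_neg] using integral_comp_neg_Iic (-s) stdPDF
  rw [hreflect, ← integral_stdPDF, ← integral_add_compl (measurableSet_Iic (a := s))
    integrable_stdPDF, compl_Iic, stdCDF]
  ring

lemma stdCDF_le_one (s : ℝ) : stdCDF s ≤ 1 := by
  linarith [stdCDF_neg s, stdCDF_nonneg (-s)]

lemma stdCDF_mono : Monotone stdCDF := fun a b hab => by
  have := stdCDF_sub_stdCDF a b
  have := intervalIntegral.integral_nonneg (μ := volume) hab fun x _ => stdPDF_nonneg x
  linarith

lemma stdCDF_add_add_stdCDF_sub_le (a u : ℝ) :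
    stdCDF (a + u) + stdCDF (a - u) ≤ 2 * stdCDF a + u ^ 2 / 2 := by
  have hshift : stdCDF a - stdCDF (a - u) = ∫ x in a..a + u, stdPDF (x - u) := by
    rw [stdCDF_sub_stdCDF, intervalIntegral.integral_comp_sub_right, add_sub_cancel_right]
  have hdiff : stdCDF (a + u) + stdCDF (a - u) - 2 * stdCDF a
      = ∫ x in a..a + u, (stdPDF x - stdPDF (x - u)) := by
    have hshifted : IntervalIntegrable (fun x => stdPDF (x - u)) volume a (a + u) :=
      (continuous_stdPDF.comp (continuous_sub_right u)).intervalIntegrable _ _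
    rw [intervalIntegral.integral_sub (continuous_stdPDF.intervalIntegrable _ _) hshifted,
      ← hshift, ← stdCDF_sub_stdCDF]
    ring
  have hbound : ‖∫ x in a..a + u, (stdPDF x - stdPDF (x - u))‖ ≤ (1 / 2 * |u|) * |a + u - a| := by
    refine intervalIntegral.norm_integral_le_of_norm_le_const fun x _ => ?_
    simpa [← Real.dist_eq] using lipschitzWith_stdPDF.dist_le_mul x (x - u)
  rw [← hdiff, Real.norm_eq_abs, add_sub_cancel_left] at hbound
  nlinarith [le_abs_self (stdCDF (a + u) + stdCDF (a - u) - 2 * stdCDF a), sq_abs u]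

lemma gaussian_two_sided_tail_le (t u : ℝ) (ht : 0 ≤ t) :
    1 - stdCDF (t - u) + stdCDF (-t - u) ≤ 2 * stdCDF (-t) + min (u ^ 2) 1 := by
  have hsecond := stdCDF_add_add_stdCDF_sub_le (-t) u
  have hreflect : 1 - stdCDF (t - u) = stdCDF (-t + u) := by
    rw [← stdCDF_neg, neg_sub, sub_eq_neg_add]
  have hprob : stdCDF (-t - u) ≤ stdCDF (t - u) := stdCDF_mono (by linarith)
  have := stdCDF_nonneg (-t)
  rw [← sub_le_iff_le_add']
  refine le_min ?_ ?_
  · linarith [sq_nonneg u]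
  · linarith

theorem stmt9 (G : Measure ℝ) [IsProbabilityMeasure G] (t : ℝ) (ht : 0 ≤ t) :
    SG G t ≤ 2 * stdCDF (-t) + rho G 1 := by
  have hmin : Integrable (fun u : ℝ => min (u ^ 2) ((1 : ℝ) ^ 2)) G := by
    refine .of_bound (by fun_prop) 1 (ae_of_all _ fun u => ?_)
    rw [one_pow, Real.norm_of_nonneg (le_min (sq_nonneg u) zero_le_one)]
    exact min_le_right _ _
  have hnonneg (u : ℝ) : 0 ≤ 1 - stdCDF (t - u) + stdCDF (-t - u) := by
    linarith [stdCDF_le_one (t - u), stdCDF_nonneg (-t - u)]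
  calc SG G t ≤ ∫ u, (2 * stdCDF (-t) + min (u ^ 2) ((1 : ℝ) ^ 2)) ∂G := by
        refine integral_mono_of_nonneg (ae_of_all _ hnonneg) ((integrable_const _).add hmin)
          (ae_of_all _ fun u => ?_)
        simpa only [one_pow] using gaussian_two_sided_tail_le t u ht
    _ = 2 * stdCDF (-t) + rho G 1 := by
        rw [integral_add (integrable_const _) hmin, integral_const, rho]
        simp
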